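/- arXiv:1612.05002 — 3 statements merged into one kernel-verified Lean document; each statement's English description precedes it below -/
import Mathlib

section
/- Let L be a frame, X a poset, and B : J(L) → X a monotone map from the join-irreducibles of L to X. Define τ⁻¹(B) : X → L by τ⁻¹(B)(x) = ⨆ {ℓ ∈ J(L) | B(ℓ) ≤ x}. Then τ⁻¹(B) is monotone, and for all x ∈ X and ℓ ∈ J(L): ℓ ≤ τ⁻¹(B)(x) if and only if B(ℓ) ≤ x. -/
/-!
In a frame, meeting `ℓ ≤ ⨆ S` with `ℓ` gives `ℓ = ⨆ {ℓ ⊓ s | s ∈ S}`, so a completely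
join-irreducible `ℓ` equals some `ℓ ⊓ s` and lies below `s ∈ S`: it is completely join-prime.
If `ℓ ≤ τ⁻¹(B)(x)`, this yields a join-irreducible `s ≥ ℓ` with `B s ≤ x`, and monotonicity of `B`
gives `B ℓ ≤ B s ≤ x`.
-/

/-- An element of a complete lattice is completely join-irreducible if
`ℓ = ⨆ S` implies `ℓ ∈ S`. -/
def CJIrr {L : Type*} [CompleteLattice L] (ℓ : L) : Prop :=
  ∀ S : Set L, ℓ = sSup S → ℓ ∈ S

theorem CJIrr.exists_le_of_le_sSup {L : Type*} [Order.Frame L] {ℓ : L} (hℓ : CJIrr ℓ)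
    {S : Set L} (h : ℓ ≤ sSup S) : ∃ s ∈ S, ℓ ≤ s := by
  have hℓ_eq : ℓ = sSup ((ℓ ⊓ ·) '' S) := by
    rw [sSup_image, ← inf_sSup_eq, inf_eq_left.mpr h]
  obtain ⟨s, hs, hℓs⟩ := hℓ _ hℓ_eq
  exact ⟨s, hs, hℓs ▸ inf_le_right⟩

/-- For a monotone `B : J(L) → X`, the map `τ⁻¹(B)(x) = ⨆ {ℓ ∈ J(L) | B ℓ ≤ x}`
is monotone, and `ℓ ≤ τ⁻¹(B)(x) ↔ B ℓ ≤ x` for join-irreducible `ℓ`. -/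
theorem stmt2 {L X : Type*} [Order.Frame L] [PartialOrder X]
    (B : L → X)
    (hB : ∀ ℓ ℓ' : L, CJIrr ℓ → CJIrr ℓ' → ℓ ≤ ℓ' → B ℓ ≤ B ℓ') :
    Monotone (fun x : X => sSup {ℓ : L | CJIrr ℓ ∧ B ℓ ≤ x}) ∧
    ∀ (x : X) (ℓ : L), CJIrr ℓ →
      (ℓ ≤ sSup {ℓ' : L | CJIrr ℓ' ∧ B ℓ' ≤ x} ↔ B ℓ ≤ x) := by
  refine ⟨fun x y hxy => sSup_le_sSup fun ℓ hℓ => ⟨hℓ.1, hℓ.2.trans hxy⟩,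
    fun x ℓ hℓ => ⟨fun h => ?_, fun h => le_sSup ⟨hℓ, h⟩⟩⟩
  obtain ⟨s, ⟨hs, hsx⟩, hℓs⟩ := hℓ.exists_le_of_le_sSup h
  exact (hB ℓ s hℓ hs hℓs).trans hsx
end

section
/- Let L be a frame, X a poset, and B : J(L) → X monotone. Then for every join-irreducible ℓ ∈ L, the set {x ∈ X | ℓ ≤ τ⁻¹(B)(x)} has minimum B(ℓ), where τ⁻¹(B)(x) = ⨆ {ℓ' ∈ J(L) | B(ℓ') ≤ x}. -/
/-- For a monotone `B : J(L) → X`, the set `{x | ℓ ≤ τ⁻¹(B)(x)}` has minimum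
`B ℓ` for every join-irreducible `ℓ`, where `τ⁻¹(B)(x) = ⨆ {ℓ' ∈ J(L) | B ℓ' ≤ x}`. -/
theorem stmt3 {L X : Type*} [Order.Frame L] [PartialOrder X]
    (B : L → X)
    (hB : ∀ ℓ ℓ' : L, CJIrr ℓ → CJIrr ℓ' → ℓ ≤ ℓ' → B ℓ ≤ B ℓ') :
    ∀ ℓ : L, CJIrr ℓ →
      IsLeast {x : X | ℓ ≤ sSup {ℓ' : L | CJIrr ℓ' ∧ B ℓ' ≤ x}} (B ℓ) := by
  intro ℓ hℓ
  refine ⟨le_sSup ⟨hℓ, le_rfl⟩, fun x hx => ?_⟩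
  obtain ⟨s, ⟨hs, hBs⟩, hℓs⟩ := hℓ.exists_le_of_le_sSup hx
  exact (hB ℓ s hℓ hs hℓs).trans hBs
end

section
/- Consider the poset Φ = {φ', φ} with φ' ≤ φ, the discrete two-element state set X = {x₁, x₂}, and the CTS α : X → (D P X)^Φ given by α(x₂)(φ') = {x₂} and α(−)(−) = ∅ otherwise. Then x₁ and x₂ are not conditionally bisimilar at condition φ: there is no family of relations (R_ψ)_{ψ ∈ Φ} with R_φ ⊆ R_{φ'}, each R_ψ a bisimulation for the transition system α(−)(ψ), and (x₁, x₂) ∈ R_φ. -/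
/-- `R` is a (strong) bisimulation for the transition system `t`. -/
def IsBisim {X : Type*} (t : X → Set X) (R : Set (X × X)) : Prop :=
  ∀ x y : X, (x, y) ∈ R →
    (∀ x' ∈ t x, ∃ y' ∈ t y, (x', y') ∈ R) ∧
    (∀ y' ∈ t y, ∃ x' ∈ t x, (x', y') ∈ R)

/-- The CTS over conditions `Φ = {φ' ≤ φ}` (encoded as `Fin 2`, `φ' = 0`,
`φ = 1`) on states `X = {x₁, x₂}` (encoded as `Fin 2`, `x₁ = 0`, `x₂ = 1`)
with the single transition `x₂ →(φ') x₂`. -/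
def ctsAlpha : Fin 2 → Fin 2 → Set (Fin 2) := fun x φ =>
  if x = 1 ∧ φ = 0 then {1} else ∅

theorem IsBisim.eq_empty_of_mem {X : Type*} {t : X → Set X} {R : Set (X × X)}
    (hR : IsBisim t R) {x y : X} (hxy : (x, y) ∈ R) (hx : t x = ∅) : t y = ∅ := by
  refine Set.eq_empty_of_forall_notMem fun y' hy' => ?_
  obtain ⟨x', hx', -⟩ := (hR x y hxy).2 y' hy'
  simp [hx] at hx'

/-- `x₁` and `x₂` are not conditionally bisimilar at condition `φ`: there is
no family `(R_ψ)` of bisimulations for the instantiations `ctsAlpha (−)(ψ)`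
with `R_φ ⊆ R_{φ'}` for `φ' ≤ φ` and `(x₁, x₂) ∈ R_φ`. -/
theorem stmt17 :
    ¬ ∃ R : Fin 2 → Set (Fin 2 × Fin 2),
        (∀ ψ χ : Fin 2, ψ ≤ χ → R χ ⊆ R ψ) ∧
        (∀ ψ : Fin 2, IsBisim (fun x => ctsAlpha x ψ) (R ψ)) ∧
        ((0 : Fin 2), (1 : Fin 2)) ∈ R 1 := by
  rintro ⟨R, hanti, hbisim, hR₁⟩
  have hR₀ : ((0 : Fin 2), (1 : Fin 2)) ∈ R 0 := hanti 0 1 (Fin.zero_le _) hR₁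
  have hstuck : ctsAlpha 1 0 = ∅ :=
    (hbisim 0).eq_empty_of_mem hR₀ (by simp [ctsAlpha])
  have hstep : (1 : Fin 2) ∈ ctsAlpha 1 0 := by simp [ctsAlpha]
  simp [hstuck] at hstep
end
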